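/- Let (R, 𝔪) be a reduced noetherian local ring of characteristic p and dimension d, J an 𝔪-primary ideal. Suppose there exists c ∈ R not in any minimal prime such that c·(J^{[q]})^* ⊆ J^{[q]} for all q = p^n (a test element). Then lim_{n→∞} l((J^{[p^n]})^*/J^{[p^n]})/p^{nd} = 0, and hence e_HK(J, R) = lim_{n→∞} l(R/(J^{[p^n]})^*)/p^{nd}. -/

import Mathlib

open Filter

/-- The `q`-th Frobenius power of an ideal. -/
def frobPow {R : Type*} [CommRing R] (J : Ideal R) (q : ℕ) : Ideal R :=
  Ideal.span ((fun x => x ^ q) '' (J : Set R))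

/-- The tight closure of an ideal `A` in a ring of characteristic `p`. -/
def tightClosure {R : Type*} [CommRing R] (p : ℕ) (A : Ideal R) : Ideal R :=
  Ideal.span {x : R | ∃ c : R, (∀ P ∈ minimalPrimes R, c ∉ P) ∧
    ∀ᶠ e in atTop, c * x ^ p ^ e ∈ frobPow A (p ^ e)}

/-- The length of a module, as the Krull dimension of its submodule lattice. -/
noncomputable def mLength (R M : Type*) [CommRing R] [AddCommGroup M] [Module R M] :
    WithBot ℕ∞ :=
  Order.krullDim (Submodule R M)

/-- The length as a natural number. -/
noncomputable def natLength (R M : Type*) [CommRing R] [AddCommGroup M] [Module R M] : ℕ :=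
  ((mLength R M).unbotD 0).toNat

section Auxiliary

variable {R : Type*} [CommRing R]

/-- All chains of ideals above `I` have length at most `n`. -/
def bdd (I : Ideal R) (n : ℕ) : Prop :=
  ∀ p : LTSeries {J : Ideal R // I ≤ J}, p.length ≤ n

lemma bdd_mono {I : Ideal R} {n m : ℕ} (h : bdd I n) (hnm : n ≤ m) : bdd I m :=
  fun p => (h p).trans hnm

lemma bdd_anti {I I' : Ideal R} (hII' : I ≤ I') {n : ℕ} (h : bdd I n) : bdd I' n := by
  intro p
  have := h (p.map (fun J => ⟨J.1, hII'.trans J.2⟩)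
    (fun a b hab => show a.1 < b.1 from hab))
  exact this

lemma bdd_top : bdd (⊤ : Ideal R) 0 := by
  intro p
  by_contra h
  have h1 : 0 < p.length := Nat.pos_of_ne_zero (by omega)
  have := p.strictMono (show (⟨0, by omega⟩ : Fin (p.length + 1)) < ⟨1, by omega⟩ by
    simp [Fin.lt_def])
  have e1 : (p ⟨0, by omega⟩).1 = ⊤ := top_le_iff.mp (p ⟨0, by omega⟩).2
  have e2 : (p ⟨1, by omega⟩).1 = ⊤ := top_le_iff.mp (p ⟨1, by omega⟩).2
  exact absurd (Subtype.ext_iff.mpr (e1.trans e2.symm)) (ne_of_lt this)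

/-- Splitting a chain of a product order into two chains. -/
lemma prod_chain_split {α β : Type*} [Preorder α] [Preorder β]
    (p : LTSeries (α × β)) :
    ∃ (q : LTSeries α) (r : LTSeries β), p.length = q.length + r.length ∧
      q.last ≤ p.last.1 ∧ r.last ≤ p.last.2 := by
  induction' hn : p.length with n ih generalizing p
  · exact ⟨RelSeries.singleton _ p.last.1, RelSeries.singleton _ p.last.2, by simp [hn],
      le_refl _, le_refl _⟩
  · have hms : p.eraseLast.length = n := by simp [hn]
    obtain ⟨q, r, hlen, hq, hr⟩ := ih p.eraseLast hms
    have hrel : p.eraseLast.last < p.last := p.eraseLast_last_rel_last (by omega)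
    rcases Prod.lt_iff.mp hrel with ⟨h1, h2⟩ | ⟨h1, h2⟩
    · refine ⟨q.snoc p.last.1 (lt_of_le_of_lt hq h1), r, by simp [hlen]; omega, ?_, hr.trans h2⟩
      simp [RelSeries.last_snoc]
    · refine ⟨q, r.snoc p.last.2 (lt_of_le_of_lt hr h2), by simp [hlen]; omega, hq.trans h1, ?_⟩
      simp [RelSeries.last_snoc]

lemma bdd_split {I : Ideal R} (x : R) {a b : ℕ}
    (ha : bdd (I.colon (Ideal.span {x})) a) (hb : bdd (I ⊔ Ideal.span {x}) b) :
    bdd I (a + b) := by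
  intro p
  have key : ∀ (K K' : Ideal R), K ≤ K' →
      K.colon (Ideal.span {x}) = K'.colon (Ideal.span {x}) →
      K ⊔ Ideal.span {x} = K' ⊔ Ideal.span {x} → K' ≤ K := by
    intro K K' hKle h1 h2 y hy
    have hy2 : y ∈ K ⊔ Ideal.span {x} := h2 ▸ Ideal.mem_sup_left hy
    obtain ⟨k, hk, z, hz, hyz⟩ := Submodule.mem_sup.mp hy2
    obtain ⟨r, rfl⟩ := Ideal.mem_span_singleton'.mp hz
    have hrx : r * x ∈ K' := by
      have heq : r * x = y - k := by rw [← hyz]; ring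
      rw [heq]
      exact Submodule.sub_mem _ hy (hKle hk)
    have hr : r ∈ K.colon (Ideal.span {x}) := by
      rw [h1, Ideal.mem_colon_span_singleton]
      exact hrx
    rw [Ideal.mem_colon_span_singleton] at hr
    rw [← hyz]
    exact Submodule.add_mem _ hk hr
  let f : {J : Ideal R // I ≤ J} →
      {J : Ideal R // I.colon (Ideal.span {x}) ≤ J} × {J : Ideal R // I ⊔ Ideal.span {x} ≤ J} :=
    fun K => (⟨K.1.colon (Ideal.span {x}),
        fun r hr => by
          rw [Ideal.mem_colon_span_singleton] at hr ⊢
          exact K.2 hr⟩,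
      ⟨K.1 ⊔ Ideal.span {x}, sup_le_sup_right K.2 _⟩)
  have hmono : StrictMono f := by
    intro K K' hKK'
    have hKle : K.1 ≤ K'.1 := Subtype.coe_le_coe.mpr hKK'.le
    have hle1 : K.1.colon (Ideal.span {x}) ≤ K'.1.colon (Ideal.span {x}) := by
      intro r hr
      rw [Ideal.mem_colon_span_singleton] at hr ⊢
      exact hKle hr
    have hle2 : K.1 ⊔ Ideal.span {x} ≤ K'.1 ⊔ Ideal.span {x} :=
      sup_le_sup_right hKle _
    refine lt_of_le_of_ne ⟨Subtype.mk_le_mk.mpr hle1, Subtype.mk_le_mk.mpr hle2⟩ ?_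
    intro heq
    have h1 : K.1.colon (Ideal.span {x}) = K'.1.colon (Ideal.span {x}) :=
      Subtype.ext_iff.mp (congrArg Prod.fst heq)
    have h2 : K.1 ⊔ Ideal.span {x} = K'.1 ⊔ Ideal.span {x} :=
      Subtype.ext_iff.mp (congrArg Prod.snd heq)
    exact hKK'.ne (Subtype.ext (le_antisymm hKle (key K.1 K'.1 hKle h1 h2)))
  obtain ⟨q, r, hlen, _, _⟩ := prod_chain_split (p.map f hmono)
  have hplen : p.length = q.length + r.length := by simpa using hlen
  have hq := ha q
  have hr := hb r
  omega

lemma bdd_maximalIdeal [IsLocalRing R] [Nontrivial R] :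
    bdd (IsLocalRing.maximalIdeal R) 1 := by
  intro p
  by_contra h
  have h2 : 2 ≤ p.length := by omega
  have hmax := IsLocalRing.maximalIdeal.isMaximal R
  have key : ∀ i : Fin (p.length + 1), (i : ℕ) + 1 ≤ p.length →
      (p i).1 = IsLocalRing.maximalIdeal R := by
    intro i hi
    have hlt : i < (⟨(i : ℕ) + 1, by omega⟩ : Fin (p.length + 1)) := by
      simp [Fin.lt_def]
    have hlt2 := p.strictMono hlt
    have hne : (p i).1 ≠ ⊤ := by
      intro htop
      have : ((p ⟨(i : ℕ) + 1, by omega⟩).1 : Ideal R) ≤ ⊤ := le_top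
      have hlt3 : (p i).1 < (p ⟨(i : ℕ) + 1, by omega⟩).1 := hlt2
      rw [htop] at hlt3
      exact absurd (le_top (a := (p ⟨(i : ℕ) + 1, by omega⟩).1)) (not_le_of_gt hlt3)
    exact (hmax.eq_of_le hne (p i).2).symm
  have e0 := key ⟨0, by omega⟩ (by simpa using by omega)
  have e1 := key ⟨1, by omega⟩ (by simpa using by omega)
  have hlt : (⟨0, by omega⟩ : Fin (p.length + 1)) < ⟨1, by omega⟩ := by simp [Fin.lt_def]
  have := p.strictMono hlt
  exact absurd (Subtype.ext_iff.mpr (e0.trans e1.symm)) (ne_of_lt this)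

/-- Every ideal containing a power of the maximal ideal has bounded chains above it. -/
lemma exists_bdd_of_pow_le [IsNoetherianRing R] [IsLocalRing R] :
    ∀ B : Ideal R, (∃ s, (IsLocalRing.maximalIdeal R) ^ s ≤ B) → ∃ n, bdd B n := by
  intro B
  induction B using WellFoundedGT.induction with
  | _ B IH =>
    rintro ⟨s, hs⟩
    by_cases hBtop : B = ⊤
    · exact ⟨0, hBtop ▸ bdd_top⟩
    classical
    have hex : ∃ j, (IsLocalRing.maximalIdeal R) ^ j ≤ B := ⟨s, hs⟩
    set j₀ := Nat.find hex with hj₀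
    have hj₀spec := Nat.find_spec hex
    have hj₀pos : 0 < j₀ := by
      by_contra h
      have h0 : Nat.find hex = 0 := by omega
      rw [h0] at hj₀spec
      simp only [pow_zero, Ideal.one_eq_top, top_le_iff] at hj₀spec
      exact hBtop hj₀spec
    have hmin : ¬ (IsLocalRing.maximalIdeal R) ^ (j₀ - 1) ≤ B :=
      Nat.find_min hex (by omega)
    obtain ⟨y, hy1, hy2⟩ := SetLike.not_le_iff_exists.mp hmin
    have hcolon : IsLocalRing.maximalIdeal R ≤ B.colon (Ideal.span {y}) := by
      intro z hz
      rw [Ideal.mem_colon_span_singleton]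
      have : z * y ∈ (IsLocalRing.maximalIdeal R) * (IsLocalRing.maximalIdeal R) ^ (j₀ - 1) :=
        Ideal.mul_mem_mul hz hy1
      have heq : (IsLocalRing.maximalIdeal R) * (IsLocalRing.maximalIdeal R) ^ (j₀ - 1) =
          (IsLocalRing.maximalIdeal R) ^ j₀ := by
        rw [← pow_succ']
        congr 1
        omega
      exact hj₀spec (heq ▸ this)
    have hstrict : B < B ⊔ Ideal.span {y} := by
      refine lt_of_le_of_ne le_sup_left ?_
      intro heq
      apply hy2
      rw [heq]
      exact Ideal.mem_sup_right (Ideal.mem_span_singleton_self y)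
    obtain ⟨b, hb⟩ := IH _ hstrict ⟨s, le_trans hs le_sup_left⟩
    exact ⟨1 + b, bdd_split y (bdd_anti hcolon bdd_maximalIdeal) hb⟩

/-- All chains of primes above `B` have length at most `e`. -/
def dimle (B : Ideal R) (e : ℕ) : Prop :=
  ∀ p : LTSeries {P : PrimeSpectrum R // B ≤ P.asIdeal}, p.length ≤ e

/-- The main growth lemma: if `dim R/B ≤ e` then `length R/(B + J^k) = O(k^e)`. -/
lemma growth [IsNoetherianRing R] [IsLocalRing R] (J : Ideal R)
    (hJrad : J.radical = IsLocalRing.maximalIdeal R) :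
    ∀ B : Ideal R, ∀ e : ℕ, dimle B e → ∃ C, ∀ k, 1 ≤ k → bdd (B ⊔ J ^ k) (C * k ^ e) := by
  intro B
  induction B using WellFoundedGT.induction with
  | _ B IH =>
    intro e hdim
    by_cases hrad : J ≤ B.radical
    -- base case: J is contained in the radical of B, so B has finite length
    · obtain ⟨t, ht⟩ := Ideal.exists_pow_le_of_le_radical_of_fg hrad
        (IsNoetherian.noetherian J)
      have hm : IsLocalRing.maximalIdeal R ≤ J.radical := le_of_eq hJrad.symm
      obtain ⟨t₀, ht₀⟩ := Ideal.exists_pow_le_of_le_radical_of_fg hm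
        (IsNoetherian.noetherian (IsLocalRing.maximalIdeal R))
      have hpow : (IsLocalRing.maximalIdeal R) ^ (t₀ * t) ≤ B := by
        rw [pow_mul]
        exact le_trans (Ideal.pow_right_mono ht₀ t) ht
      obtain ⟨n, hn⟩ := exists_bdd_of_pow_le B ⟨t₀ * t, hpow⟩
      refine ⟨n, fun k hk => ?_⟩
      have : bdd (B ⊔ J ^ k) n := bdd_anti le_sup_left hn
      exact bdd_mono this (Nat.le_mul_of_pos_right n (Nat.pow_pos (by omega : 0 < k)))
    -- inductive case
    · -- find a minimal prime over B not containing J, hence ≠ maximal ideal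
      have hmaxmem : ∀ P : Ideal R, P ∈ B.minimalPrimes → J ≤ P →
          P = IsLocalRing.maximalIdeal R := by
        intro P hP hJP
        have hPprime : P.IsPrime := hP.1.1
        have : J.radical ≤ P.radical := Ideal.radical_mono hJP
        rw [hJrad, hPprime.radical] at this
        exact ((IsLocalRing.maximalIdeal.isMaximal R).eq_of_le hPprime.ne_top this).symm
      obtain ⟨P, hPmem, hJP⟩ : ∃ P, (B ≤ P ∧ P.IsPrime) ∧ ¬ J ≤ P := by
        by_contra h
        push_neg at h
        apply hrad
        rw [Ideal.radical_eq_sInf]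
        exact le_sInf fun P hP => h P ⟨hP.1, hP.2⟩
      haveI := hPmem.2
      obtain ⟨Q, hQmin, hQP⟩ := Ideal.exists_minimalPrimes_le hPmem.1
      have hJQ : ¬ J ≤ Q := fun h => hJP (h.trans hQP)
      have hQnm : Q ≠ IsLocalRing.maximalIdeal R := by
        intro h
        exact hJQ (h ▸ (Ideal.le_radical.trans (le_of_eq hJrad)))
      have hQprime : Q.IsPrime := hQmin.1.1
      have hBQ : B ≤ Q := hQmin.1.2
      -- e ≥ 1
      have he : 1 ≤ e := by
        have hQm : Q < IsLocalRing.maximalIdeal R :=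
          lt_of_le_of_ne (IsLocalRing.le_maximalIdeal hQprime.ne_top) hQnm
        have hmprime : (IsLocalRing.maximalIdeal R).IsPrime :=
          (IsLocalRing.maximalIdeal.isMaximal R).isPrime
        have hBm : B ≤ IsLocalRing.maximalIdeal R := hBQ.trans hQm.le
        let x₀ : {P : PrimeSpectrum R // B ≤ P.asIdeal} := ⟨⟨Q, hQprime⟩, hBQ⟩
        let x₁ : {P : PrimeSpectrum R // B ≤ P.asIdeal} :=
          ⟨⟨IsLocalRing.maximalIdeal R, hmprime⟩, hBm⟩
        have hx : x₀ < x₁ := by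
          show (⟨Q, hQprime⟩ : PrimeSpectrum R) < ⟨IsLocalRing.maximalIdeal R, hmprime⟩
          rw [← PrimeSpectrum.asIdeal_lt_asIdeal]
          exact hQm
        have := hdim ((RelSeries.singleton _ x₀).snoc x₁ hx)
        exact this
      -- finiteness of minimal primes
      have hfin : B.minimalPrimes.Finite := by
        rw [Ideal.minimalPrimes_eq_comap]
        exact Set.Finite.image _ (minimalPrimes.finite_of_isNoetherianRing (R ⧸ B))
      -- prime avoidance: find x ∈ J avoiding all non-maximal minimal primes of B
      obtain ⟨x, hxJ, hxavoid⟩ : ∃ x ∈ J, ∀ P ∈ B.minimalPrimes,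
          P ≠ IsLocalRing.maximalIdeal R → x ∉ P := by
        classical
        by_contra h
        push_neg at h
        set F : Set (Ideal R) := {P ∈ B.minimalPrimes | P ≠ IsLocalRing.maximalIdeal R} with hF
        have hFfin : F.Finite := hfin.subset (Set.sep_subset _ _)
        have hsub : (J : Set R) ⊆ ⋃ P ∈ hFfin.toFinset, (P : Set R) := by
          intro z hz
          obtain ⟨P, hP1, hP2, hP3⟩ := h z hz
          exact Set.mem_biUnion (hFfin.mem_toFinset.mpr ⟨hP1, hP2⟩) hP3
        have := (Ideal.subset_union_prime (R := R) (s := hFfin.toFinset) (f := id)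
          (IsLocalRing.maximalIdeal R) (IsLocalRing.maximalIdeal R)
          (fun P hP _ _ => ((hFfin.mem_toFinset.mp hP).1).1.1)).mp (by simpa using hsub)
        obtain ⟨P, hPs, hJP'⟩ := this
        obtain ⟨hPmin, hPne⟩ := hFfin.mem_toFinset.mp hPs
        exact hPne (hmaxmem P hPmin hJP')
      have hxB : x ∉ B := fun h => hxavoid Q hQmin hQnm (hBQ h)
      -- dimension drop
      have hdim' : dimle (B ⊔ Ideal.span {x}) (e - 1) := by
        intro p
        by_contra hcon
        have hl : e - 1 + 1 ≤ p.length := by omega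
        -- the head of p is a prime containing B and x
        have hheadB : B ≤ p.head.1.asIdeal := le_sup_left.trans p.head.2
        have hheadx : x ∈ p.head.1.asIdeal :=
          p.head.2 (Ideal.mem_sup_right (Ideal.mem_span_singleton_self x))
        haveI := p.head.1.isPrime
        obtain ⟨Q', hQ'min, hQ'head⟩ := Ideal.exists_minimalPrimes_le hheadB
        rcases eq_or_lt_of_le hQ'head with heq | hlt
        · -- head is a minimal prime of B containing x, hence the maximal ideal
          have hheadmin : p.head.1.asIdeal ∈ B.minimalPrimes := heq ▸ hQ'min
          have hhead : p.head.1.asIdeal = IsLocalRing.maximalIdeal R := by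
            by_contra hne
            exact hxavoid _ hheadmin hne hheadx
          -- then the chain has length 0, contradiction with e ≥ 1
          have hlen1 : 1 ≤ p.length := by omega
          have hlt01 : (⟨0, by omega⟩ : Fin (p.length + 1)) < ⟨1, by omega⟩ := by
            simp [Fin.lt_def]
          have hmono := p.strictMono hlt01
          have hhead0 : p.head = p ⟨0, by omega⟩ := rfl
          have h1le : (p ⟨1, by omega⟩).1.asIdeal ≤ IsLocalRing.maximalIdeal R :=
            IsLocalRing.le_maximalIdeal (p ⟨1, by omega⟩).1.isPrime.ne_top
          have h0lt : (p ⟨0, by omega⟩).1.asIdeal < (p ⟨1, by omega⟩).1.asIdeal := by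
            rw [PrimeSpectrum.asIdeal_lt_asIdeal]
            exact hmono
          rw [← hhead0, hhead] at h0lt
          exact absurd (h0lt.trans_le h1le) (lt_irrefl _)
        · -- extend the chain downward
          have hmap : ∀ P : {P : PrimeSpectrum R // B ⊔ Ideal.span {x} ≤ P.asIdeal},
              B ≤ P.1.asIdeal := fun P => le_sup_left.trans P.2
          let q := (p.map (fun P => (⟨P.1, hmap P⟩ : {P : PrimeSpectrum R // B ≤ P.asIdeal}))
            (fun a b hab => show a.1 < b.1 from hab))
          haveI := hQ'min.1.1
          let q' := q.cons ⟨⟨Q', hQ'min.1.1⟩, hQ'min.1.2⟩ (by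
            show (⟨Q', hQ'min.1.1⟩ : PrimeSpectrum R) < q.head.1
            rw [← PrimeSpectrum.asIdeal_lt_asIdeal]
            exact hlt)
          have := hdim q'
          have hq'len : q'.length = p.length + 1 := by simp [q', q]; rfl
          omega
      -- apply the inductive hypothesis to B + (x)
      have hstrict : B < B ⊔ Ideal.span {x} := by
        refine lt_of_le_of_ne le_sup_left fun heq => hxB ?_
        rw [heq]
        exact Ideal.mem_sup_right (Ideal.mem_span_singleton_self x)
      obtain ⟨C', hC'⟩ := IH _ hstrict (e - 1) hdim'
      -- now prove by induction on k
      have key : ∀ k : ℕ, bdd (B ⊔ J ^ k) (C' * k * k ^ (e - 1)) := by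
        intro k
        induction k with
        | zero =>
          have : B ⊔ J ^ 0 = ⊤ := by simp [Ideal.one_eq_top]
          rw [this]
          exact bdd_mono bdd_top (by omega)
        | succ k ihk =>
          have hcolon : B ⊔ J ^ k ≤ (B ⊔ J ^ (k + 1)).colon (Ideal.span {x}) := by
            refine sup_le ?_ ?_
            · intro r hr
              rw [Ideal.mem_colon_span_singleton]
              exact Ideal.mem_sup_left (Ideal.mul_mem_right x B hr)
            · intro r hr
              rw [Ideal.mem_colon_span_singleton]
              refine Ideal.mem_sup_right ?_
              have : r * x ∈ J ^ k * J := Ideal.mul_mem_mul hr hxJ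
              rwa [← pow_succ] at this
          have hsup : (B ⊔ J ^ (k + 1)) ⊔ Ideal.span {x} =
              (B ⊔ Ideal.span {x}) ⊔ J ^ (k + 1) := by
            rw [sup_assoc, sup_comm (J ^ (k + 1)) (Ideal.span {x}), ← sup_assoc]
          have h1 : bdd ((B ⊔ J ^ (k + 1)).colon (Ideal.span {x})) (C' * k * k ^ (e - 1)) :=
            bdd_anti hcolon ihk
          have h2 : bdd ((B ⊔ J ^ (k + 1)) ⊔ Ideal.span {x}) (C' * (k + 1) ^ (e - 1)) := by
            rw [hsup]
            exact hC' (k + 1) (by omega)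
          have := bdd_split x h1 h2
          refine bdd_mono this ?_
          have hle : k ^ (e - 1) ≤ (k + 1) ^ (e - 1) := Nat.pow_le_pow_left (by omega) _
          calc C' * k * k ^ (e - 1) + C' * (k + 1) ^ (e - 1)
              ≤ C' * k * (k + 1) ^ (e - 1) + C' * (k + 1) ^ (e - 1) := by
                have := Nat.mul_le_mul_left (C' * k) hle
                omega
            _ = C' * (k + 1) * (k + 1) ^ (e - 1) := by ring
      refine ⟨C', fun k hk => ?_⟩
      have : C' * k * k ^ (e - 1) = C' * k ^ e := by
        rw [mul_assoc, ← pow_succ']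
        congr 2
        omega
      exact this ▸ key k

lemma pow_mem_frobPow {A : Ideal R} {x : R} (hx : x ∈ A) (p e : ℕ) [Fact p.Prime] [CharP R p] :
    x ^ p ^ e ∈ frobPow A (p ^ e) := by
  have hq : p ^ e ≠ 0 := pow_ne_zero e (Nat.Prime.ne_zero Fact.out)
  have hx' : x ∈ Submodule.span R (A : Set R) := by rwa [Submodule.span_eq]
  clear hx
  induction hx' using Submodule.span_induction with
  | mem a ha => exact Ideal.subset_span ⟨a, ha, rfl⟩
  | zero => rw [zero_pow hq]; exact Ideal.zero_mem _
  | add a b _ _ iha ihb =>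
    rw [add_pow_char_pow a b p e]
    exact Ideal.add_mem _ iha ihb
  | smul r a _ iha =>
    rw [smul_eq_mul, mul_pow]
    exact Ideal.mul_mem_left _ _ iha

lemma pow_le_frobPow {J : Ideal R} {S : Finset R} (hS : Ideal.span (S : Set R) = J)
    (q : ℕ) (hq : 1 ≤ q) :
    J ^ ((q - 1) * S.card + 1) ≤ frobPow J q := by
  classical
  set n := (q - 1) * S.card + 1 with hn
  rw [← hS, Ideal.span, Submodule.span_pow]
  rw [Submodule.span_le]
  intro z hz
  rw [Set.mem_pow] at hz
  obtain ⟨f, hf⟩ := hz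
  -- pigeonhole: some element of S occurs at least q times among f i
  have hmaps : ∀ i ∈ (Finset.univ : Finset (Fin n)), (f i : R) ∈ S := fun i _ => (f i).2
  have hcard : S.card * (q - 1) < (Finset.univ : Finset (Fin n)).card := by
    have hcomm : S.card * (q - 1) = (q - 1) * S.card := Nat.mul_comm _ _
    simp only [Finset.card_univ, Fintype.card_fin]
    omega
  obtain ⟨a, haS, hfib⟩ :=
    Finset.exists_lt_card_fiber_of_mul_lt_card_of_maps_to hmaps hcard
  set T : Finset (Fin n) := {i ∈ Finset.univ | (f i : R) = a} with hT
  have hq' : q ≤ T.card := by omega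
  have hz' : z = (∏ i ∈ T, (f i : R)) *
      ∏ i ∈ Finset.univ.filter (fun i => ¬ (f i : R) = a), (f i : R) := by
    rw [← hf, List.prod_ofFn]
    exact (Finset.prod_filter_mul_prod_filter_not Finset.univ _ _).symm
  have hTa : (∏ i ∈ T, (f i : R)) = a ^ T.card := by
    rw [Finset.prod_congr rfl (fun i hi => by
      simpa [hT] using (Finset.mem_filter.mp hi).2), Finset.prod_const]
  have : z = a ^ q * (a ^ (T.card - q) *
      ∏ i ∈ Finset.univ.filter (fun i => ¬ (f i : R) = a), (f i : R)) := by
    rw [hz', hTa, ← mul_assoc, ← pow_add]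
    congr 2
    omega
  rw [this]
  exact Ideal.mul_mem_right _ _ (Ideal.subset_span ⟨a, Ideal.subset_span haS, rfl⟩)

lemma le_tightClosure {A : Ideal R} (p : ℕ) [Fact p.Prime] [CharP R p]
    (c : R) (hc : ∀ P ∈ minimalPrimes R, c ∉ P) :
    A ≤ tightClosure p A := by
  intro x hx
  refine Ideal.subset_span ⟨c, hc, Eventually.of_forall fun e => ?_⟩
  exact Ideal.mul_mem_left _ _ (pow_mem_frobPow hx p e)

lemma tightClosure_le_colon {A : Ideal R} {p : ℕ} {c : R}
    (h : Ideal.span {c} * tightClosure p A ≤ A) :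
    tightClosure p A ≤ A.colon (Ideal.span {c}) := by
  intro x hx
  rw [Ideal.mem_colon_span_singleton, mul_comm]
  exact h (Ideal.mul_mem_mul (Ideal.mem_span_singleton_self c) hx)

lemma mLength_eq (I : Ideal R) :
    mLength R (R ⧸ I) = Order.krullDim {J : Ideal R // I ≤ J} :=
  Order.krullDim_eq_of_orderIso (Submodule.comapMkQRelIso I)

lemma krullDim_helper {α : Type*} [Preorder α] [Nonempty α] {n : ℕ}
    (h : Order.krullDim α ≤ (n : WithBot ℕ∞)) :
    ∃ m : ℕ, m ≤ n ∧ Order.krullDim α = (m : WithBot ℕ∞) := by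
  have h0 : (0 : WithBot ℕ∞) ≤ Order.krullDim α := Order.krullDim_nonneg
  rcases hkd : Order.krullDim α with _ | k
  · rw [hkd] at h0
    exact absurd h0 (by
      show ¬ (0 : WithBot ℕ∞) ≤ ⊥
      simp)
  · rw [hkd] at h
    have h' : (k : WithBot ℕ∞) ≤ ((n : ℕ∞) : WithBot ℕ∞) := h
    have hk : k ≤ (n : ℕ∞) := WithBot.coe_le_coe.mp h'
    rcases k with _ | m
    · exact absurd hk (by
        show ¬ (⊤ : ℕ∞) ≤ (n : ℕ∞)
        simp)
    · have h'' : ((m : ℕ∞)) ≤ (n : ℕ∞) := hk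
      exact ⟨m, by exact_mod_cast h'', rfl⟩

lemma krullDim_le_of_bdd {I : Ideal R} {n : ℕ} (h : bdd I n) :
    Order.krullDim {J : Ideal R // I ≤ J} ≤ (n : WithBot ℕ∞) := by
  rw [Order.krullDim]
  refine iSup_le fun q => ?_
  exact_mod_cast h q

lemma natLength_le_of_bdd {I : Ideal R} {n : ℕ} (h : bdd I n) :
    natLength R (R ⧸ I) ≤ n := by
  haveI : Nonempty {J : Ideal R // I ≤ J} := ⟨⟨I, le_refl I⟩⟩
  obtain ⟨m, hmn, hm⟩ := krullDim_helper (krullDim_le_of_bdd h)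
  rw [natLength, mLength_eq, hm]
  show (((m : WithBot ℕ∞)).unbotD 0).toNat ≤ n
  simpa using hmn

lemma bdd_natLength {I : Ideal R} {n : ℕ} (h : bdd I n) :
    bdd I (natLength R (R ⧸ I)) := by
  haveI : Nonempty {J : Ideal R // I ≤ J} := ⟨⟨I, le_refl I⟩⟩
  obtain ⟨m, hmn, hm⟩ := krullDim_helper (krullDim_le_of_bdd h)
  intro q
  have hkd : (q.length : WithBot ℕ∞) ≤ Order.krullDim {J : Ideal R // I ≤ J} :=
    Order.LTSeries.length_le_krullDim q
  rw [hm] at hkd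
  have hq : q.length ≤ m := by exact_mod_cast hkd
  have : natLength R (R ⧸ I) = m := by
    rw [natLength, mLength_eq, hm]
    rfl
  omega

end Auxiliary

/-- In a reduced noetherian local ring of characteristic `p` and dimension `d`
with a test element `c`, the Hilbert-Kunz multiplicity of an `𝔪`-primary ideal
`J` can be computed using tight closures of Frobenius powers:
`lim l((J^{[pⁿ]})^*/J^{[pⁿ]})/p^{nd} = 0` and
`e_HK(J,R) = lim l(R/(J^{[pⁿ]})^*)/p^{nd}`. -/
theorem hilbertKunz_via_tightClosure {R : Type*} [CommRing R] [IsReduced R]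
    [IsNoetherianRing R] [IsLocalRing R] (p : ℕ) [Fact p.Prime] [CharP R p]
    (J : Ideal R) (hJ : J.radical = IsLocalRing.maximalIdeal R)
    (d : ℕ) (hd : ringKrullDim R = d)
    (c : R) (hc : ∀ P ∈ minimalPrimes R, c ∉ P)
    (hctest : ∀ n : ℕ, Ideal.span {c} * tightClosure p (frobPow J (p ^ n)) ≤ frobPow J (p ^ n))
    (eHK : ℝ)
    (heHK : Tendsto (fun n => ((natLength R (R ⧸ frobPow J (p ^ n))) : ℝ) / (p : ℝ) ^ (n * d))
      atTop (nhds eHK)) :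
    Tendsto (fun n =>
        (((natLength R (R ⧸ frobPow J (p ^ n))) : ℝ) -
          ((natLength R (R ⧸ tightClosure p (frobPow J (p ^ n)))) : ℝ)) / (p : ℝ) ^ (n * d))
      atTop (nhds 0) ∧
    Tendsto (fun n =>
        ((natLength R (R ⧸ tightClosure p (frobPow J (p ^ n)))) : ℝ) / (p : ℝ) ^ (n * d))
      atTop (nhds eHK) := by
  have hp2 : 2 ≤ p := (Fact.out : p.Prime).two_le
  set m := IsLocalRing.maximalIdeal R with hm
  -- notation
  set A : ℕ → Ideal R := fun n => frobPow J (p ^ n) with hA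
  set T : ℕ → Ideal R := fun n => tightClosure p (A n) with hT
  set f : ℕ → ℕ := fun n => natLength R (R ⧸ A n) with hf
  set g : ℕ → ℕ := fun n => natLength R (R ⧸ T n) with hg
  -- generators of J
  obtain ⟨S, hS⟩ : J.FG := IsNoetherian.noetherian J
  set μ := S.card with hμ
  -- chains of primes are bounded by d
  have hdim0 : dimle (⊥ : Ideal R) d := by
    intro pch
    have hchain := Order.LTSeries.length_le_krullDim
      (pch.map Subtype.val (fun a b hab => hab))
    rw [show Order.krullDim (PrimeSpectrum R) = ringKrullDim R from rfl, hd] at hchain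
    exact_mod_cast hchain
  -- the length of R/J^k grows like C₀ k^d
  obtain ⟨C0, hC0⟩ := growth J hJ ⊥ d hdim0
  -- per-n data
  set s : ℕ → ℕ := fun n => (p ^ n - 1) * μ + 1 with hs
  have hs1 : ∀ n, 1 ≤ s n := fun n => Nat.le_add_left 1 _
  have hpn1 : ∀ n : ℕ, 1 ≤ p ^ n := fun n => Nat.one_le_pow _ _ (by omega)
  have hfrob : ∀ n, J ^ (s n) ≤ A n := fun n => pow_le_frobPow hS (p ^ n) (hpn1 n)
  have hbddA : ∀ n, bdd (A n) (C0 * (s n) ^ d) := by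
    intro n
    have h1 := hC0 (s n) (hs1 n)
    rw [bot_sup_eq] at h1
    exact bdd_anti (hfrob n) h1
  have hbddT : ∀ n, bdd (T n) (C0 * (s n) ^ d) :=
    fun n => bdd_anti (le_tightClosure p c hc) (hbddA n)
  -- g n ≤ f n
  have hgf : ∀ n, g n ≤ f n :=
    fun n => natLength_le_of_bdd (bdd_anti (le_tightClosure p c hc) (bdd_natLength (hbddA n)))
  by_cases hd0 : d = 0
  · -- dimension 0 : c is a unit and T n = A n
    subst hd0
    have hcunit : IsUnit c := by
      haveI : m.IsPrime := (IsLocalRing.maximalIdeal.isMaximal R).isPrime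
      obtain ⟨P, hPmin, hPm⟩ := Ideal.exists_minimalPrimes_le (bot_le : (⊥ : Ideal R) ≤ m)
      have hPprime : P.IsPrime := hPmin.1.1
      have hPeq : P = m := by
        by_contra hne
        have hlt : P < m := lt_of_le_of_ne hPm hne
        have hx : (⟨⟨P, hPprime⟩, bot_le⟩ : {Q : PrimeSpectrum R // (⊥ : Ideal R) ≤ Q.asIdeal}) <
            ⟨⟨m, inferInstance⟩, bot_le⟩ := by
          show (⟨P, hPprime⟩ : PrimeSpectrum R) < ⟨m, inferInstance⟩
          rw [← PrimeSpectrum.asIdeal_lt_asIdeal]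
          exact hlt
        have := hdim0 ((RelSeries.singleton _ _).snoc _ hx)
        exact Nat.not_succ_le_zero 0 this
      have : c ∉ m := hPeq ▸ hc P hPmin
      exact IsLocalRing.notMem_maximalIdeal.mp this
    have hTA : ∀ n, T n = A n := by
      intro n
      refine le_antisymm ?_ (le_tightClosure p c hc)
      intro x hx
      have h1 : x * c ∈ A n := Ideal.mem_colon_span_singleton.mp (tightClosure_le_colon (hctest n) hx)
      rw [mul_comm] at h1
      exact (Ideal.unit_mul_mem_iff_mem _ hcunit).mp h1
    have hfg : ∀ n, f n = g n := by
      intro n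
      show natLength R (R ⧸ A n) = natLength R (R ⧸ T n)
      rw [hTA n]
    constructor
    · have hz : Tendsto (fun n => (((f n) : ℝ) - ((g n) : ℝ)) / (p : ℝ) ^ (n * 0))
          atTop (nhds 0) := by
        have heq : (fun n => (((f n) : ℝ) - ((g n) : ℝ)) / (p : ℝ) ^ (n * 0)) =
            (fun _ => (0 : ℝ)) := by
          funext n
          rw [hfg n]
          simp
        rw [heq]
        exact tendsto_const_nhds
      exact hz
    · have hz : Tendsto (fun n => ((g n) : ℝ) / (p : ℝ) ^ (n * 0)) atTop (nhds eHK) := by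
        have heq : (fun n => ((g n) : ℝ) / (p : ℝ) ^ (n * 0)) =
            (fun n => ((f n) : ℝ) / (p : ℝ) ^ (n * 0)) := by
          funext n
          rw [hfg n]
        rw [heq]
        exact heHK
      exact hz
  · -- dimension ≥ 1
    obtain ⟨d', rfl⟩ : ∃ d', d = d' + 1 := ⟨d - 1, by omega⟩
    have hdsub : d' + 1 - 1 = d' := rfl
    -- dim R/(c) ≤ d'
    have hdimc : dimle (Ideal.span {c}) d' := by
      intro pch
      have hheadc : c ∈ pch.head.1.asIdeal :=
        pch.head.2 (Ideal.mem_span_singleton_self c)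
      haveI := pch.head.1.isPrime
      obtain ⟨Q, hQmin, hQle⟩ := Ideal.exists_minimalPrimes_le (bot_le (a := pch.head.1.asIdeal))
      have hQprime : Q.IsPrime := hQmin.1.1
      have hQlt : Q < pch.head.1.asIdeal :=
        lt_of_le_of_ne hQle (fun h => hc Q hQmin (h ▸ hheadc))
      let q := pch.map (fun P => (⟨P.1, bot_le⟩ : {P : PrimeSpectrum R // (⊥ : Ideal R) ≤ P.asIdeal}))
        (fun a b hab => show a.1 < b.1 from hab)
      let q' := q.cons ⟨⟨Q, hQprime⟩, bot_le⟩ (by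
        show (⟨Q, hQprime⟩ : PrimeSpectrum R) < q.head.1
        rw [← PrimeSpectrum.asIdeal_lt_asIdeal]
        exact hQlt)
      have hlen := hdim0 q'
      have : q'.length = pch.length + 1 := by simp [q', q]; rfl
      omega
    obtain ⟨C1, hC1⟩ := growth J hJ (Ideal.span {c}) d' hdimc
    -- the correction term
    set U : ℕ → ℕ := fun n => C1 * (s n) ^ d' with hU
    have hbddU : ∀ n, bdd (A n ⊔ Ideal.span {c}) (U n) := by
      intro n
      have h1 := hC1 (s n) (hs1 n)
      have h2 : Ideal.span {c} ⊔ J ^ (s n) ≤ Ideal.span {c} ⊔ A n :=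
        sup_le_sup_left (hfrob n) _
      have h3 := bdd_anti h2 h1
      rwa [sup_comm] at h3
    -- f n ≤ g n + U n
    have hkey : ∀ n, f n ≤ g n + U n := by
      intro n
      have hTle : T n ≤ (A n).colon (Ideal.span {c}) := tightClosure_le_colon (hctest n)
      have hcolon : bdd ((A n).colon (Ideal.span {c})) (g n) :=
        bdd_anti hTle (bdd_natLength (hbddT n))
      exact natLength_le_of_bdd (bdd_split c hcolon (hbddU n))
    -- numerical bound on U n
    set C2 : ℕ := C1 * (μ + 1) ^ d' with hC2
    have hUbound : ∀ n, U n ≤ C2 * (p ^ n) ^ d' := by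
      intro n
      have hsn : s n ≤ p ^ n * (μ + 1) := by
        have h1 : (p ^ n - 1) * μ ≤ p ^ n * μ := Nat.mul_le_mul_right μ (by omega)
        have h2 : p ^ n * μ + 1 ≤ p ^ n * (μ + 1) := by
          have := hpn1 n
          nlinarith
        show (p ^ n - 1) * μ + 1 ≤ p ^ n * (μ + 1)
        omega
      calc U n = C1 * (s n) ^ d' := rfl
        _ ≤ C1 * (p ^ n * (μ + 1)) ^ d' :=
            Nat.mul_le_mul_left C1 (Nat.pow_le_pow_left hsn _)
        _ = C2 * (p ^ n) ^ d' := by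
            rw [hC2, Nat.mul_pow]
            ring
    -- the real-valued squeeze
    have hppos : (0 : ℝ) < (p : ℝ) := by positivity
    have hzero : Tendsto (fun n => (((f n) : ℝ) - ((g n) : ℝ)) / (p : ℝ) ^ (n * (d' + 1)))
        atTop (nhds 0) := by
      have hpownd : ∀ n : ℕ, (p : ℝ) ^ (n * (d' + 1)) = (p : ℝ) ^ (n * d') * (p : ℝ) ^ n := by
        intro n
        rw [show n * (d' + 1) = n * d' + n by ring, pow_add]
      have hnonneg : ∀ n, 0 ≤ (((f n) : ℝ) - ((g n) : ℝ)) / (p : ℝ) ^ (n * (d' + 1)) := by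
        intro n
        apply div_nonneg _ (by positivity)
        have := hgf n
        have : ((g n) : ℝ) ≤ ((f n) : ℝ) := by exact_mod_cast this
        linarith
      have hbound : ∀ n, (((f n) : ℝ) - ((g n) : ℝ)) / (p : ℝ) ^ (n * (d' + 1)) ≤
          (C2 : ℝ) * ((1 : ℝ) / p) ^ n := by
        intro n
        have h5 : ((f n) : ℝ) - ((g n) : ℝ) ≤ (C2 : ℝ) * (p : ℝ) ^ (n * d') := by
          have h2 : ((f n) : ℝ) ≤ ((g n) : ℝ) + ((U n : ℕ) : ℝ) := by exact_mod_cast hkey n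
          have h3 : ((U n : ℕ) : ℝ) ≤ (C2 : ℝ) * (p : ℝ) ^ (n * d') := by
            have h6 := hUbound n
            have hcast : ((C2 * (p ^ n) ^ d' : ℕ) : ℝ) = (C2 : ℝ) * (p : ℝ) ^ (n * d') := by
              push_cast
              rw [← pow_mul]
            rw [← hcast]
            exact_mod_cast h6
          linarith
        calc (((f n) : ℝ) - ((g n) : ℝ)) / (p : ℝ) ^ (n * (d' + 1))
            ≤ ((C2 : ℝ) * (p : ℝ) ^ (n * d')) / (p : ℝ) ^ (n * (d' + 1)) := by
              gcongr
          _ = (C2 : ℝ) * ((1 : ℝ) / p) ^ n := by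
              rw [hpownd n]
              have hne1 : ((p : ℝ) ^ (n * d')) ≠ 0 := by positivity
              have hne2 : ((p : ℝ) ^ n) ≠ 0 := by positivity
              field_simp
              rw [mul_assoc, ← mul_pow, mul_one_div_cancel hppos.ne', one_pow, mul_one]
      have htends : Tendsto (fun n : ℕ => (C2 : ℝ) * ((1 : ℝ) / p) ^ n) atTop (nhds 0) := by
        have h01 : (0 : ℝ) ≤ 1 / p := by positivity
        have h11 : (1 : ℝ) / p < 1 := by
          rw [div_lt_one hppos]
          exact_mod_cast by omega
        have := (tendsto_pow_atTop_nhds_zero_of_lt_one h01 h11).const_mul (C2 : ℝ)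
        simpa using this
      exact squeeze_zero hnonneg hbound htends
    refine ⟨hzero, ?_⟩
    have heq : (fun n => ((g n) : ℝ) / (p : ℝ) ^ (n * (d' + 1))) =
        (fun n => ((f n) : ℝ) / (p : ℝ) ^ (n * (d' + 1)) -
          (((f n) : ℝ) - ((g n) : ℝ)) / (p : ℝ) ^ (n * (d' + 1))) := by
      funext n
      rw [div_sub_div_same]
      ring_nf
    have hlim2 : Tendsto (fun n => ((g n) : ℝ) / (p : ℝ) ^ (n * (d' + 1))) atTop (nhds eHK) := by
      rw [heq]
      have := heHK.sub hzero
      simpa using this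
    exact hlim2
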